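/- Let L be a quadratic field extension of a p-adic field F (residue characteristic ≠ 2), with valuation v_L. Call x ∈ L^× minimal if v_L(x) = v_L(x₀), where x₀ = x − Tr(x)/2 is the imaginary (trace-zero) part of x. If x ∈ L^× is minimal, then for all a, b ∈ F: v_L(a + bx) = min{v_L(a), v_L(bx)}. -/
import Mathlib


/-- Corollary 2.7: valuations of `F`-linear combinations of a minimal
element.  `L/F` a quadratic extension of a p-adic field of odd residue characteristic,
with valuation `vL`, Galois involution `σ`.  If `x ∈ L^×` is minimal, i.e.
`vL x = vL x₀` for its imaginary part `x₀ = x − (x + σx)/2`, then for all `a b ∈ F`: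
`vL(a + b·x) = min{vL a, vL (b·x)}`. -/
theorem stmt_5
    (F L : Type*) [Field F] [Field L] [Algebra F L]
    (hdim : Module.finrank F L = 2)
    (σ : L →ₐ[F] L) (hσ : ∀ x : L, σ (σ x) = x)
    (hfix : ∀ x : L, σ x = x → ∃ a : F, x = algebraMap F L a)
    (vL : L → WithTop ℤ)
    (hv0 : ∀ x : L, vL x = ⊤ ↔ x = 0)
    (hvmul : ∀ x y : L, vL (x * y) = vL x + vL y)
    (hvadd : ∀ x y : L, min (vL x) (vL y) ≤ vL (x + y))
    (hvσ : ∀ x : L, vL (σ x) = vL x)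
    (hv2 : vL (2 : L) = 0)  -- odd residue characteristic
    (x : L) (hx : x ≠ 0)
    (hmin : vL x = vL (x - (x + σ x) / 2)) :
    ∀ a b : F, vL (algebraMap F L a + algebraMap F L b * x)
      = min (vL (algebraMap F L a)) (vL (algebraMap F L b * x)) := by
  -- vL 1 = 0
  have hv1 : vL (1 : L) = 0 := by
    have h := hvmul 1 1
    rw [one_mul] at h
    obtain ⟨n, hn⟩ := WithTop.ne_top_iff_exists.mp
      (fun ht => one_ne_zero ((hv0 1).mp ht))
    rw [← hn] at h
    have : n = n + n := by exact_mod_cast h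
    have hn0 : n = 0 := by omega
    rw [← hn, hn0]; rfl
  -- vL (-1) = 0
  have hvneg1 : vL (-1 : L) = 0 := by
    have h := hvmul (-1) (-1)
    rw [neg_mul_neg, one_mul, hv1] at h
    obtain ⟨n, hn⟩ := WithTop.ne_top_iff_exists.mp
      (fun ht => (neg_ne_zero.mpr (one_ne_zero : (1:L) ≠ 0)) ((hv0 (-1)).mp ht))
    rw [← hn] at h
    have : n + n = (0 : ℤ) := by exact_mod_cast h.symm
    have hn0 : n = 0 := by omega
    rw [← hn, hn0]; rfl
  have hvneg : ∀ z : L, vL (-z) = vL z := by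
    intro z
    have := hvmul (-1) z
    rw [neg_one_mul, hvneg1, zero_add] at this
    exact this
  intro a b
  set A := algebraMap F L a with hA
  set B := algebraMap F L b with hB
  have hσA : σ A = A := σ.commutes a
  have hσB : σ B = B := σ.commutes b
  -- v(x - σ x) = v x
  have hx0 : vL (x - σ x) = vL x := by
    have h2ne : (2 : L) ≠ 0 := fun h => by simp [h, (hv0 0).mpr rfl] at hv2
    have h2 : x - σ x = 2 * (x - (x + σ x) / 2) := by field_simp; ring
    rw [h2, hvmul, hv2, zero_add, ← hmin]
  -- v(y - σ y) = v(B*x)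
  have hdiff : (A + B * x) - σ (A + B * x) = B * (x - σ x) := by
    rw [map_add, map_mul, hσA, hσB]; ring
  have hvdiff : vL ((A + B * x) - σ (A + B * x)) = vL (B * x) := by
    rw [hdiff, hvmul, hx0, hvmul]
  -- upper bound: v y ≤ v (B x)
  have hy_le : vL (A + B * x) ≤ vL (B * x) := by
    rw [← hvdiff]
    have h := hvadd (A + B * x) (-(σ (A + B * x)))
    rw [hvneg, hvσ, min_self] at h
    simpa [sub_eq_add_neg] using h
  have hge : min (vL A) (vL (B * x)) ≤ vL (A + B * x) := hvadd A (B * x)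
  rcases le_total (vL (B * x)) (vL A) with hle | hle
  · rw [min_eq_right hle]
    exact le_antisymm hy_le (by rwa [min_eq_right hle] at hge)
  · rw [min_eq_left hle]
    refine le_antisymm ?_ (by rwa [min_eq_left hle] at hge)
    -- A = y - B x, so v A ≥ min (v y, v (B x))
    have h := hvadd (A + B * x) (-(B * x))
    rw [hvneg, add_neg_cancel_right] at h
    by_contra hlt
    push_neg at hlt
    have h1 : vL A < min (vL (A + B * x)) (vL (B * x)) :=
      lt_min hlt (lt_of_le_of_ne hle (by
        intro heq
        exact absurd (heq ▸ hy_le) (not_le_of_gt hlt)))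
    exact absurd (lt_of_lt_of_le h1 h) (lt_irrefl _)
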